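/- arXiv:2301.00176 — 2 statements merged into one kernel-verified Lean document; each statement's English description precedes it below -/
import Mathlib

section
/- Let A be a real m×n matrix with no zero row and let b ∈ ℝ^m. Consider the RKAS iteration: starting from x⁰ = 0, at step k a row index i_k ∈ {1,…,m} is drawn independently with probability ‖A_{i_k,:}‖₂²/‖A‖_F², and x^{k+1} = x^k − α_k A_{i_k,:}ᵀ with α_k = ⟨A A_{i_k,:}ᵀ, A x^k − b⟩ / ‖A A_{i_k,:}ᵀ‖₂². Then for every k ≥ 0, E[‖x^k − x̄‖₂²] ≤ σ_min(A)⁻² · (1 − σ_min(A)⁴/(‖A‖₂² ‖A‖_F²))^k · ‖A x⁰ − A x̄‖₂², where the expectation is over the i.i.d. index sequence, i.e. E[g(x^k)] = ∑_{(i_0,…,i_{k−1}) ∈ [m]^k} (∏_{j<k} ‖A_{i_j,:}‖₂²/‖A‖_F²) · g(x^k(i_0,…,i_{k−1})). -/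
open Matrix
open scoped RealInnerProductSpace

/-- `mulE A x` is the matrix-vector product `A x`, viewed as a map between
Euclidean spaces (so that `‖·‖` is the Euclidean norm and `⟪·,·⟫` the dot product). -/
noncomputable def mulE {m n : ℕ} (A : Matrix (Fin m) (Fin n) ℝ)
    (x : EuclideanSpace ℝ (Fin n)) : EuclideanSpace ℝ (Fin m) :=
  Matrix.toEuclideanLin A x

/-- `rowE A i` is the `i`-th row of `A` (i.e. the vector `A_{i,:}ᵀ`),
viewed as an element of Euclidean space. -/
noncomputable def rowE {m n : ℕ} (A : Matrix (Fin m) (Fin n) ℝ) (i : Fin m) :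
    EuclideanSpace ℝ (Fin n) :=
  (EuclideanSpace.equiv (Fin n) ℝ).symm (A i)

/-- One step of the RKAS method: `x⁺ = x − α A_{i,:}ᵀ` with the adaptive
stepsize `α = ⟨A A_{i,:}ᵀ, A x − b⟩ / ‖A A_{i,:}ᵀ‖²`. -/
noncomputable def rkasStep {m n : ℕ} (A : Matrix (Fin m) (Fin n) ℝ)
    (b : EuclideanSpace ℝ (Fin m)) (x : EuclideanSpace ℝ (Fin n)) (i : Fin m) :
    EuclideanSpace ℝ (Fin n) :=
  x - (⟪mulE A (rowE A i), mulE A x - b⟫ / ‖mulE A (rowE A i)‖ ^ 2) • rowE A i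

/-- `frobSq A = ‖A‖_F²`, the squared Frobenius norm of `A`. -/
noncomputable def frobSq {m n : ℕ} (A : Matrix (Fin m) (Fin n) ℝ) : ℝ :=
  ∑ i, ∑ j, A i j ^ 2

/-- `rkasSeq A b x0 k s` is the RKAS iterate `x^k` obtained from the initial
point `x0` using the row indices `s = (i_0, …, i_{k-1}) ∈ [m]^k`. -/
noncomputable def rkasSeq {m n : ℕ} (A : Matrix (Fin m) (Fin n) ℝ)
    (b : EuclideanSpace ℝ (Fin m)) (x0 : EuclideanSpace ℝ (Fin n)) :
    (k : ℕ) → (Fin k → Fin m) → EuclideanSpace ℝ (Fin n)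
  | 0, _ => x0
  | k + 1, s => rkasStep A b (rkasSeq A b x0 k fun j => s j.castSucc) (s (Fin.last k))

lemma mulE_apply {m n : ℕ} (A : Matrix (Fin m) (Fin n) ℝ) (x : EuclideanSpace ℝ (Fin n)) (i : Fin m) :
    mulE A x i = ∑ j, A i j * x j := by
  simp [mulE, Matrix.toEuclideanLin, Matrix.mulVec, dotProduct]

lemma inner_eq_sum {n : ℕ} (x y : EuclideanSpace ℝ (Fin n)) : ⟪x, y⟫ = ∑ i, x i * y i := by
  simp [PiLp.inner_apply, mul_comm]

lemma rowE_apply {m n : ℕ} (A : Matrix (Fin m) (Fin n) ℝ) (i : Fin m) (j : Fin n) :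
    rowE A i j = A i j := rfl

lemma mulE_sub {m n : ℕ} (A : Matrix (Fin m) (Fin n) ℝ) (x y : EuclideanSpace ℝ (Fin n)) :
    mulE A (x - y) = mulE A x - mulE A y := map_sub _ _ _

lemma mulE_smul {m n : ℕ} (A : Matrix (Fin m) (Fin n) ℝ) (c : ℝ) (x : EuclideanSpace ℝ (Fin n)) :
    mulE A (c • x) = c • mulE A x := map_smul _ _ _

lemma inner_rowE {m n : ℕ} (A : Matrix (Fin m) (Fin n) ℝ) (i : Fin m) (z : EuclideanSpace ℝ (Fin n)) :
    ⟪rowE A i, z⟫ = mulE A z i := by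
  rw [inner_eq_sum, mulE_apply]; rfl

lemma mulE_adjoint {m n : ℕ} (A : Matrix (Fin m) (Fin n) ℝ) (z : EuclideanSpace ℝ (Fin n))
    (v : EuclideanSpace ℝ (Fin m)) : ⟪mulE A z, v⟫ = ⟪z, mulE Aᵀ v⟫ := by
  rw [inner_eq_sum, inner_eq_sum]
  simp only [mulE_apply, Matrix.transpose_apply, Finset.sum_mul, Finset.mul_sum]
  rw [Finset.sum_comm]
  congr 1; ext j; congr 1; ext i; ring

lemma rowE_eq_mulE {m n : ℕ} (A : Matrix (Fin m) (Fin n) ℝ) (i : Fin m) :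
    rowE A i = mulE Aᵀ (EuclideanSpace.single i 1) := by
  ext j
  rw [mulE_apply]
  simp [rowE_apply, EuclideanSpace.single_apply]

lemma norm_sq_eq {n : ℕ} (v : EuclideanSpace ℝ (Fin n)) : ‖v‖ ^ 2 = ∑ i, v i ^ 2 := by
  rw [← real_inner_self_eq_norm_sq, inner_eq_sum]
  simp [sq]

lemma frobSq_eq {m n : ℕ} (A : Matrix (Fin m) (Fin n) ℝ) :
    frobSq A = ∑ i, ‖rowE A i‖ ^ 2 := by
  simp only [frobSq, norm_sq_eq, rowE_apply]

lemma rowE_norm_pos {m n : ℕ} (A : Matrix (Fin m) (Fin n) ℝ) {i : Fin m} (h : A i ≠ 0) :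
    0 < ‖rowE A i‖ := by
  rw [norm_pos_iff]
  intro hc
  apply h
  funext j
  have := congrArg (fun v : EuclideanSpace ℝ (Fin n) => v j) hc
  simpa [rowE_apply] using this

lemma frobSq_pos {m n : ℕ} (A : Matrix (Fin m) (Fin n) ℝ) (hA : A ≠ 0) : 0 < frobSq A := by
  have : ∃ i j, A i j ≠ 0 := by
    by_contra hc
    push_neg at hc
    exact hA (by funext i j; exact hc i j)
  obtain ⟨i, j, hij⟩ := this
  rw [frobSq]
  have h1 : ∀ i ∈ Finset.univ, (0:ℝ) ≤ ∑ j, A i j ^ 2 :=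
    fun i _ => Finset.sum_nonneg fun j _ => sq_nonneg _
  have h2 : (0:ℝ) < ∑ j', A i j' ^ 2 :=
    Finset.sum_pos' (fun _ _ => sq_nonneg _) ⟨j, Finset.mem_univ _, by positivity⟩
  exact Finset.sum_pos' h1 ⟨i, Finset.mem_univ _, h2⟩

lemma norm_mulE_sq_le {m n : ℕ} (A : Matrix (Fin m) (Fin n) ℝ) (z : EuclideanSpace ℝ (Fin n)) :
    ‖mulE A z‖ ^ 2 ≤ frobSq A * ‖z‖ ^ 2 := by
  rw [norm_sq_eq, frobSq_eq, Finset.sum_mul]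
  apply Finset.sum_le_sum
  intro i _
  have h1 : mulE A z i = ⟪rowE A i, z⟫ := (inner_rowE A i z).symm
  rw [h1]
  have h2 := abs_real_inner_le_norm (rowE A i) z
  have h3 : |⟪rowE A i, z⟫| ^ 2 = ⟪rowE A i, z⟫ ^ 2 := sq_abs _
  nlinarith [abs_nonneg ⟪rowE A i, z⟫, norm_nonneg (rowE A i), norm_nonneg z]

lemma rkasStep_mem {m n : ℕ} (A : Matrix (Fin m) (Fin n) ℝ) (b : EuclideanSpace ℝ (Fin m))
    {x : EuclideanSpace ℝ (Fin n)} (hx : x ∈ Set.range (mulE Aᵀ)) (i : Fin m) :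
    rkasStep A b x i ∈ Set.range (mulE Aᵀ) := by
  obtain ⟨u, hu⟩ := hx
  set c := ⟪mulE A (rowE A i), mulE A x - b⟫ / ‖mulE A (rowE A i)‖ ^ 2
  refine ⟨u - c • EuclideanSpace.single i 1, ?_⟩
  rw [mulE_sub, mulE_smul, ← rowE_eq_mulE, hu, rkasStep]

lemma sub_mem_range {m n : ℕ} (A : Matrix (Fin m) (Fin n) ℝ)
    {x y : EuclideanSpace ℝ (Fin n)} (hx : x ∈ Set.range (mulE Aᵀ))
    (hy : y ∈ Set.range (mulE Aᵀ)) : x - y ∈ Set.range (mulE Aᵀ) := by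
  obtain ⟨u, hu⟩ := hx; obtain ⟨v, hv⟩ := hy
  exact ⟨u - v, by rw [mulE_sub, hu, hv]⟩

/-- The core per-step expectation bound. -/
lemma step_bound {m n : ℕ} (A : Matrix (Fin m) (Fin n) ℝ)
    (hA : A ≠ 0) (hrows : ∀ i, A i ≠ 0) (b : EuclideanSpace ℝ (Fin m))
    (xbar : EuclideanSpace ℝ (Fin n))
    (hxbar_normal : mulE Aᵀ (mulE A xbar) = mulE Aᵀ b)
    -- `σ_min(A)`: the smallest nonzero singular value of `A`
    (σmin : ℝ) (hσ_pos : 0 < σmin)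
    (hσ_lb : ∀ z ∈ Set.range (mulE Aᵀ), σmin * ‖z‖ ≤ ‖mulE A z‖)
    (nA : ℝ) (hnA_pos : 0 < nA) (hnA_ub : ∀ z, ‖mulE A z‖ ≤ nA * ‖z‖)
    (x : EuclideanSpace ℝ (Fin n)) (hx : x ∈ Set.range (mulE Aᵀ))
    (hxbar_mem : xbar ∈ Set.range (mulE Aᵀ)) :
    ∑ i, (‖rowE A i‖ ^ 2 / frobSq A) * ‖mulE A (rkasStep A b x i) - mulE A xbar‖ ^ 2
      ≤ (1 - σmin ^ 4 / (nA ^ 2 * frobSq A)) * ‖mulE A x - mulE A xbar‖ ^ 2 := by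
  have hfrob := frobSq_pos A hA
  set r : EuclideanSpace ℝ (Fin m) := mulE A x - mulE A xbar with hr
  set w : Fin m → EuclideanSpace ℝ (Fin m) := fun i => mulE A (rowE A i) with hw
  -- w i ≠ 0
  have hw_pos : ∀ i, 0 < ‖w i‖ := by
    intro i
    have h1 : rowE A i ∈ Set.range (mulE Aᵀ) := ⟨_, (rowE_eq_mulE A i).symm⟩
    have h2 := hσ_lb _ h1
    have h3 := rowE_norm_pos A (hrows i)
    calc (0:ℝ) < σmin * ‖rowE A i‖ := by positivity
      _ ≤ ‖w i‖ := h2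
  -- the residual identity: ⟪w i, mulE A x - b⟫ = ⟪w i, r⟫
  have hres : ∀ i, ⟪w i, mulE A x - b⟫ = ⟪w i, r⟫ := by
    intro i
    have : ⟪w i, mulE A xbar - b⟫ = 0 := by
      rw [hw, mulE_adjoint, mulE_sub, hxbar_normal, sub_self, inner_zero_right]
    have hsplit : (mulE A x - b) = r + (mulE A xbar - b) := by rw [hr]; abel
    rw [hsplit, inner_add_right, this, add_zero]
  -- per-index norm identity
  have hnorm : ∀ i, ‖mulE A (rkasStep A b x i) - mulE A xbar‖ ^ 2
      = ‖r‖ ^ 2 - ⟪w i, r⟫ ^ 2 / ‖w i‖ ^ 2 := by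
    intro i
    have hwne : ‖w i‖ ≠ 0 := (hw_pos i).ne' 
    set c : ℝ := ⟪w i, r⟫ / ‖w i‖ ^ 2 with hc
    have h1 : mulE A (rkasStep A b x i) - mulE A xbar = r - c • w i := by
      rw [rkasStep, mulE_sub, mulE_smul]
      rw [show (⟪mulE A (rowE A i), mulE A x - b⟫ : ℝ) = ⟪w i, r⟫ from hres i, hr, hw, ← hc]
      abel
    have hcomm : (⟪r, w i⟫:ℝ) = ⟪w i, r⟫ := real_inner_comm _ _
    rw [h1, norm_sub_sq_real, inner_smul_right, norm_smul, hcomm, Real.norm_eq_abs,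
      mul_pow, sq_abs, hc]
    set t : ℝ := ⟪w i, r⟫
    field_simp
    ring
  -- t i := ⟪w i, r⟫ and Σ t² = ‖A Aᵀ r‖²
  have ht_eq : ∀ i, (⟪w i, r⟫:ℝ) = mulE A (mulE Aᵀ r) i := by
    intro i; rw [hw, mulE_adjoint, inner_rowE]
  have hsum_t : ∑ i, (⟪w i, r⟫:ℝ)^2 = ‖mulE A (mulE Aᵀ r)‖^2 := by
    rw [norm_sq_eq]; exact Finset.sum_congr rfl fun i _ => by rw [ht_eq]
  have hAtr_mem : mulE Aᵀ r ∈ Set.range (mulE Aᵀ) := ⟨r, rfl⟩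
  have h_e_mem : x - xbar ∈ Set.range (mulE Aᵀ) := sub_mem_range A hx hxbar_mem
  have hrAe : r = mulE A (x - xbar) := by rw [mulE_sub, hr]
  have hAtr : σmin * ‖r‖ ≤ ‖mulE Aᵀ r‖ := by
    rcases eq_or_ne r 0 with h0 | h0
    · simp [h0]
    · have hrpos : 0 < ‖r‖ := norm_pos_iff.mpr h0
      have h1 : ‖r‖^2 ≤ ‖x - xbar‖ * ‖mulE Aᵀ r‖ := by
        have he : (‖r‖:ℝ)^2 = ⟪x - xbar, mulE Aᵀ r⟫ := by
          rw [← mulE_adjoint, ← hrAe, real_inner_self_eq_norm_sq]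
        rw [he]; exact real_inner_le_norm _ _
      have h2 : σmin * ‖x - xbar‖ ≤ ‖r‖ := by
        rw [hrAe]; exact hσ_lb _ h_e_mem
      nlinarith [norm_nonneg (mulE Aᵀ r), norm_nonneg (x - xbar)]
  have hAAtr : σmin^2 * ‖r‖ ≤ ‖mulE A (mulE Aᵀ r)‖ := by
    have h3 := hσ_lb _ hAtr_mem
    calc σmin^2 * ‖r‖ = σmin * (σmin * ‖r‖) := by ring
      _ ≤ σmin * ‖mulE Aᵀ r‖ := by nlinarith
      _ ≤ ‖mulE A (mulE Aᵀ r)‖ := h3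
  have hpsum : ∑ i, ‖rowE A i‖^2 / frobSq A = 1 := by
    rw [← Finset.sum_div, ← frobSq_eq, div_self hfrob.ne']
  have hterm : ∀ i ∈ Finset.univ, (⟪w i, r⟫:ℝ)^2 / (nA^2 * frobSq A)
      ≤ (‖rowE A i‖^2 / frobSq A) * (⟪w i, r⟫^2 / ‖w i‖^2) := by
    intro i _
    have hwle : ‖w i‖^2 ≤ nA^2 * ‖rowE A i‖^2 := by
      have h4 := hnA_ub (rowE A i)
      nlinarith [norm_nonneg (w i), norm_nonneg (rowE A i)]
    have hwp := hw_pos i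
    have hrownn := rowE_norm_pos A (hrows i)
    rw [div_mul_div_comm, div_le_div_iff₀ (by positivity) (by positivity)]
    nlinarith [mul_le_mul_of_nonneg_left (mul_le_mul_of_nonneg_left hwle hfrob.le)
      (sq_nonneg (⟪w i, r⟫:ℝ))]
  calc ∑ i, (‖rowE A i‖ ^ 2 / frobSq A) * ‖mulE A (rkasStep A b x i) - mulE A xbar‖ ^ 2
      = ∑ i, ((‖rowE A i‖ ^ 2 / frobSq A) * ‖r‖^2
          - (‖rowE A i‖ ^ 2 / frobSq A) * (⟪w i, r⟫^2 / ‖w i‖^2)) := by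
        refine Finset.sum_congr rfl fun i _ => ?_
        rw [hnorm i]; ring
    _ = ‖r‖^2 - ∑ i, (‖rowE A i‖ ^ 2 / frobSq A) * (⟪w i, r⟫^2 / ‖w i‖^2) := by
        rw [Finset.sum_sub_distrib, ← Finset.sum_mul, hpsum, one_mul]
    _ ≤ ‖r‖^2 - ∑ i, (⟪w i, r⟫:ℝ)^2 / (nA^2 * frobSq A) := by
        have := Finset.sum_le_sum hterm
        linarith
    _ = ‖r‖^2 - ‖mulE A (mulE Aᵀ r)‖^2 / (nA^2 * frobSq A) := by
        rw [← Finset.sum_div, hsum_t]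
    _ ≤ ‖r‖^2 - σmin^4 * ‖r‖^2 / (nA^2 * frobSq A) := by
        have h5 : σmin^4 * ‖r‖^2 ≤ ‖mulE A (mulE Aᵀ r)‖^2 := by
          have h7 : (0:ℝ) ≤ σmin^2 * ‖r‖ := by positivity
          nlinarith [mul_le_mul hAAtr hAAtr h7 (norm_nonneg (mulE A (mulE Aᵀ r)))]
        have h6 : (0:ℝ) < nA^2 * frobSq A := by positivity
        gcongr
    _ = (1 - σmin ^ 4 / (nA ^ 2 * frobSq A)) * ‖r‖ ^ 2 := by
        rw [sub_mul, one_mul, div_mul_eq_mul_div]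

lemma rkasSeq_snoc {m n : ℕ} (A : Matrix (Fin m) (Fin n) ℝ) (b : EuclideanSpace ℝ (Fin m))
    (x0 : EuclideanSpace ℝ (Fin n)) (k : ℕ) (t : Fin k → Fin m) (i : Fin m) :
    rkasSeq A b x0 (k + 1) (Fin.snoc t i) = rkasStep A b (rkasSeq A b x0 k t) i := by
  have h : rkasSeq A b x0 (k + 1) (Fin.snoc t i)
      = rkasStep A b (rkasSeq A b x0 k fun j => (Fin.snoc t i : Fin (k+1) → Fin m) j.castSucc)
          ((Fin.snoc t i : Fin (k+1) → Fin m) (Fin.last k)) := rfl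
  rw [h, Fin.snoc_last]
  have h2 : (fun j => (Fin.snoc t i : Fin (k+1) → Fin m) j.castSucc) = t := by
    funext j; exact Fin.snoc_castSucc _ _ _
  rw [h2]

lemma rkasSeq_mem {m n : ℕ} (A : Matrix (Fin m) (Fin n) ℝ) (b : EuclideanSpace ℝ (Fin m))
    (k : ℕ) (s : Fin k → Fin m) : rkasSeq A b 0 k s ∈ Set.range (mulE Aᵀ) := by
  induction k with
  | zero => exact ⟨0, map_zero _⟩
  | succ k ih => exact rkasStep_mem A b (ih _) _

/-- Corollary 3.2: for the RKAS method started at `x⁰ = 0`, with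
row `i` drawn with probability `‖A_{i,:}‖²/‖A‖_F²` at each step,
`E[‖x^k − x̄‖²] ≤ σ_min(A)⁻² (1 − σ_min(A)⁴/(‖A‖₂² ‖A‖_F²))^k ‖A x⁰ − A x̄‖²`. -/
theorem rkas_error_convergence (m n : ℕ) (A : Matrix (Fin m) (Fin n) ℝ)
    (hA : A ≠ 0) (hrows : ∀ i, A i ≠ 0)
    (b : EuclideanSpace ℝ (Fin m))
    -- `x̄ = A†b`: the unique vector in `Range(Aᵀ)` satisfying `Aᵀ A x̄ = Aᵀ b`
    (xbar : EuclideanSpace ℝ (Fin n))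
    (hxbar_mem : xbar ∈ Set.range (mulE Aᵀ))
    (hxbar_normal : mulE Aᵀ (mulE A xbar) = mulE Aᵀ b)
    (σmin : ℝ) (hσ_pos : 0 < σmin)
    (hσ_lb : ∀ z ∈ Set.range (mulE Aᵀ), σmin * ‖z‖ ≤ ‖mulE A z‖)
    (hσ_att : ∃ z ∈ Set.range (mulE Aᵀ), z ≠ 0 ∧ ‖mulE A z‖ = σmin * ‖z‖)
    -- `nA = ‖A‖₂`: the spectral norm of `A`
    (nA : ℝ) (hnA_ub : ∀ z, ‖mulE A z‖ ≤ nA * ‖z‖)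
    (hnA_att : ∃ z : EuclideanSpace ℝ (Fin n), z ≠ 0 ∧ ‖mulE A z‖ = nA * ‖z‖)
    (k : ℕ) :
    ∑ s : Fin k → Fin m,
        (∏ j, ‖rowE A (s j)‖ ^ 2 / frobSq A) *
          ‖rkasSeq A b 0 k s - xbar‖ ^ 2
      ≤ (σmin ^ 2)⁻¹ * (1 - σmin ^ 4 / (nA ^ 2 * frobSq A)) ^ k *
          ‖mulE A 0 - mulE A xbar‖ ^ 2 := by
  have hfrob := frobSq_pos A hA
  -- σmin ≤ nA and nA > 0
  have hσ_le_nA : σmin ≤ nA := by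
    obtain ⟨z, _, hz0, hz⟩ := hσ_att
    have h1 := hnA_ub z
    have h2 : 0 < ‖z‖ := norm_pos_iff.mpr hz0
    rw [hz] at h1
    exact le_of_mul_le_mul_right h1 h2
  have hnA_pos : 0 < nA := lt_of_lt_of_le hσ_pos hσ_le_nA
  -- nA² ≤ frobSq A
  have hnA_frob : nA ^ 2 ≤ frobSq A := by
    obtain ⟨z, hz0, hz⟩ := hnA_att
    have h2 : 0 < ‖z‖ := norm_pos_iff.mpr hz0
    have h3 := norm_mulE_sq_le A z
    rw [hz] at h3
    have h4 : nA ^ 2 * ‖z‖^2 ≤ frobSq A * ‖z‖^2 := by nlinarith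
    have h5 : (0:ℝ) < ‖z‖^2 := by positivity
    nlinarith
  set q : ℝ := 1 - σmin ^ 4 / (nA ^ 2 * frobSq A) with hq
  have hq_nonneg : 0 ≤ q := by
    rw [hq, sub_nonneg, div_le_one (by positivity)]
    have h6 : σmin ^ 4 ≤ nA ^ 4 := pow_le_pow_left₀ hσ_pos.le hσ_le_nA 4
    calc σmin ^ 4 ≤ nA ^ 4 := h6
      _ = nA^2 * nA^2 := by ring
      _ ≤ nA^2 * frobSq A := by nlinarith
  have hp_nonneg : ∀ i : Fin m, (0:ℝ) ≤ ‖rowE A i‖ ^ 2 / frobSq A := fun i => by positivity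
  -- main induction on residuals
  have hmain : ∀ K : ℕ, ∑ s : Fin K → Fin m,
      (∏ j, ‖rowE A (s j)‖ ^ 2 / frobSq A) * ‖mulE A (rkasSeq A b 0 K s) - mulE A xbar‖ ^ 2
      ≤ q ^ K * ‖mulE A 0 - mulE A xbar‖ ^ 2 := by
    intro K
    induction K with
    | zero =>
      simp [show rkasSeq A b (0 : EuclideanSpace ℝ (Fin n)) 0 default = 0 from rfl]
    | succ K ih =>
      have hsplit : ∑ s : Fin (K+1) → Fin m,
          (∏ j, ‖rowE A (s j)‖ ^ 2 / frobSq A) * ‖mulE A (rkasSeq A b 0 (K+1) s) - mulE A xbar‖ ^ 2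
          = ∑ p : Fin m × (Fin K → Fin m),
            (∏ j, ‖rowE A ((Fin.snoc p.2 p.1 : Fin (K+1) → Fin m) j)‖ ^ 2 / frobSq A) *
              ‖mulE A (rkasSeq A b 0 (K+1) (Fin.snoc p.2 p.1)) - mulE A xbar‖ ^ 2 := by
        rw [← Equiv.sum_comp (Fin.snocEquiv (fun _ => Fin m))]
        rfl
      rw [hsplit, Fintype.sum_prod_type]
      have hstep : ∀ (t : Fin K → Fin m) (i : Fin m),
          (∏ j, ‖rowE A ((Fin.snoc t i : Fin (K+1) → Fin m) j)‖ ^ 2 / frobSq A)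
          = (∏ j, ‖rowE A (t j)‖ ^ 2 / frobSq A) * (‖rowE A i‖ ^ 2 / frobSq A) := by
        intro t i
        rw [Fin.prod_univ_castSucc]
        congr 1
        · exact Finset.prod_congr rfl fun j _ => by rw [Fin.snoc_castSucc]
        · rw [Fin.snoc_last]
      calc ∑ i : Fin m, ∑ t : Fin K → Fin m,
            (∏ j, ‖rowE A ((Fin.snoc t i : Fin (K+1) → Fin m) j)‖ ^ 2 / frobSq A) *
              ‖mulE A (rkasSeq A b 0 (K+1) (Fin.snoc t i)) - mulE A xbar‖ ^ 2
          = ∑ t : Fin K → Fin m, (∏ j, ‖rowE A (t j)‖ ^ 2 / frobSq A) *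
              ∑ i : Fin m, (‖rowE A i‖ ^ 2 / frobSq A) *
                ‖mulE A (rkasStep A b (rkasSeq A b 0 K t) i) - mulE A xbar‖ ^ 2 := by
            rw [Finset.sum_comm]
            refine Finset.sum_congr rfl fun t _ => ?_
            rw [Finset.mul_sum]
            refine Finset.sum_congr rfl fun i _ => ?_
            rw [hstep, rkasSeq_snoc]
            ring
        _ ≤ ∑ t : Fin K → Fin m, (∏ j, ‖rowE A (t j)‖ ^ 2 / frobSq A) *
              (q * ‖mulE A (rkasSeq A b 0 K t) - mulE A xbar‖ ^ 2) := by
            refine Finset.sum_le_sum fun t _ => ?_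
            refine mul_le_mul_of_nonneg_left ?_ (Finset.prod_nonneg fun j _ => hp_nonneg _)
            exact step_bound A hA hrows b xbar hxbar_normal σmin hσ_pos hσ_lb nA hnA_pos
              hnA_ub _ (rkasSeq_mem A b K t) hxbar_mem
        _ = q * ∑ t : Fin K → Fin m, (∏ j, ‖rowE A (t j)‖ ^ 2 / frobSq A) *
              ‖mulE A (rkasSeq A b 0 K t) - mulE A xbar‖ ^ 2 := by
            rw [Finset.mul_sum]; refine Finset.sum_congr rfl fun t _ => by ring
        _ ≤ q * (q ^ K * ‖mulE A 0 - mulE A xbar‖ ^ 2) := by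
            exact mul_le_mul_of_nonneg_left ih hq_nonneg
        _ = q ^ (K+1) * ‖mulE A 0 - mulE A xbar‖ ^ 2 := by ring
  -- convert error to residual
  have hconv : ∀ s : Fin k → Fin m, ‖rkasSeq A b 0 k s - xbar‖ ^ 2
      ≤ (σmin ^ 2)⁻¹ * ‖mulE A (rkasSeq A b 0 k s) - mulE A xbar‖ ^ 2 := by
    intro s
    have hmem := sub_mem_range A (rkasSeq_mem A b k s) hxbar_mem
    have h1 : σmin * ‖rkasSeq A b 0 k s - xbar‖ ≤ ‖mulE A (rkasSeq A b 0 k s - xbar)‖ :=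
      hσ_lb _ hmem
    rw [← mulE_sub A (rkasSeq A b 0 k s) xbar, inv_mul_eq_div, le_div_iff₀ (by positivity)]
    have h0 : (0:ℝ) ≤ σmin * ‖rkasSeq A b 0 k s - xbar‖ := by positivity
    nlinarith [mul_le_mul h1 h1 h0 (norm_nonneg (mulE A (rkasSeq A b 0 k s - xbar)))]
  calc ∑ s : Fin k → Fin m, (∏ j, ‖rowE A (s j)‖ ^ 2 / frobSq A) * ‖rkasSeq A b 0 k s - xbar‖ ^ 2
      ≤ ∑ s : Fin k → Fin m, (∏ j, ‖rowE A (s j)‖ ^ 2 / frobSq A) *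
          ((σmin ^ 2)⁻¹ * ‖mulE A (rkasSeq A b 0 k s) - mulE A xbar‖ ^ 2) := by
        refine Finset.sum_le_sum fun s _ => ?_
        exact mul_le_mul_of_nonneg_left (hconv s) (Finset.prod_nonneg fun j _ => hp_nonneg _)
    _ = (σmin ^ 2)⁻¹ * ∑ s : Fin k → Fin m, (∏ j, ‖rowE A (s j)‖ ^ 2 / frobSq A) *
          ‖mulE A (rkasSeq A b 0 k s) - mulE A xbar‖ ^ 2 := by
        rw [Finset.mul_sum]; exact Finset.sum_congr rfl fun s _ => by ring
    _ ≤ (σmin ^ 2)⁻¹ * (q ^ k * ‖mulE A 0 - mulE A xbar‖ ^ 2) := by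
        exact mul_le_mul_of_nonneg_left (hmain k) (by positivity)
    _ = (σmin ^ 2)⁻¹ * q ^ k * ‖mulE A 0 - mulE A xbar‖ ^ 2 := by ring
end

section
/- Let A be a real m×n matrix, b ∈ ℝ^m, and x ∈ ℝⁿ. Fix a row index i with A A_{i,:}ᵀ ≠ 0 and define the RKAS update x⁺ = x − α A_{i,:}ᵀ with α = ⟨A A_{i,:}ᵀ, A x − b⟩ / ‖A A_{i,:}ᵀ‖₂². Then x⁺ minimizes ‖A y − A x̄‖₂² over the line y = x − t A_{i,:}ᵀ, t ∈ ℝ: for every t ∈ ℝ, ‖A(x − t A_{i,:}ᵀ) − A x̄‖₂² ≥ ‖A x⁺ − A x̄‖₂². -/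
open Matrix
open scoped RealInnerProductSpace

/-!
With `v = A A_{i,:}ᵀ` and `c = A x − A x̄`, the objective along the line is `t ↦ ‖c − t v‖²`,
a one-dimensional least-squares problem minimized at `t = ⟪v, c⟫ / ‖v‖²`. The normal equations
say that the residual `A x̄ − b` is orthogonal to the range of `A`, so `⟪v, A x − b⟫ = ⟪v, c⟫`
and the RKAS stepsize is exactly this minimizer.
-/

section LineSearch

variable {E : Type*} [NormedAddCommGroup E] [InnerProductSpace ℝ E]

lemma inner_sub_div_smul_self_eq_zero (c v : E) :
    ⟪v, c - (⟪v, c⟫ / ‖v‖ ^ 2) • v⟫ = 0 := by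
  rcases eq_or_ne v 0 with rfl | hv
  · simp
  have hv2 : ‖v‖ ^ 2 ≠ 0 := by positivity
  rw [inner_sub_right, real_inner_smul_right, real_inner_self_eq_norm_sq,
    div_mul_cancel₀ _ hv2, sub_self]

lemma norm_sub_smul_sq_eq_of_inner_eq_zero {c v : E} {α : ℝ} (h : ⟪v, c - α • v⟫ = 0)
    (t : ℝ) : ‖c - t • v‖ ^ 2 = ‖c - α • v‖ ^ 2 + (t - α) ^ 2 * ‖v‖ ^ 2 := by
  have hsplit : c - t • v = (c - α • v) - (t - α) • v := by
    rw [sub_smul]; abel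
  have horth : ⟪c - α • v, (t - α) • v⟫ = 0 := by
    rw [real_inner_smul_right, real_inner_comm, h, mul_zero]
  rw [hsplit, norm_sub_sq_real, horth, norm_smul, Real.norm_eq_abs, mul_pow, sq_abs]
  ring

lemma norm_sub_div_smul_sq_le (c v : E) (t : ℝ) :
    ‖c - (⟪v, c⟫ / ‖v‖ ^ 2) • v‖ ^ 2 ≤ ‖c - t • v‖ ^ 2 := by
  rw [norm_sub_smul_sq_eq_of_inner_eq_zero (inner_sub_div_smul_self_eq_zero c v) t]
  exact le_add_of_nonneg_right (by positivity)

end LineSearch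

section MatrixVector

variable {m n : ℕ} (A : Matrix (Fin m) (Fin n) ℝ)

lemma mulE_sub_smul (x r : EuclideanSpace ℝ (Fin n)) (t : ℝ) :
    mulE A (x - t • r) = mulE A x - t • mulE A r := by
  simp only [mulE, map_sub, map_smul]

lemma inner_mulE_left (u : EuclideanSpace ℝ (Fin n)) (w : EuclideanSpace ℝ (Fin m)) :
    ⟪mulE A u, w⟫ = ⟪u, mulE Aᵀ w⟫ := by
  rw [mulE, mulE, ← conjTranspose_eq_transpose_of_trivial,
    toEuclideanLin_conjTranspose_eq_adjoint, LinearMap.adjoint_inner_right]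

lemma inner_mulE_residual_eq_zero {b : EuclideanSpace ℝ (Fin m)}
    {xbar : EuclideanSpace ℝ (Fin n)} (hnormal : mulE Aᵀ (mulE A xbar) = mulE Aᵀ b)
    (u : EuclideanSpace ℝ (Fin n)) : ⟪mulE A u, mulE A xbar - b⟫ = 0 := by
  rw [inner_mulE_left, mulE, map_sub, ← mulE, ← mulE, hnormal, sub_self, inner_zero_right]

end MatrixVector

theorem rkas_step_line_minimizer_general (m n : ℕ) (A : Matrix (Fin m) (Fin n) ℝ)
    (b : EuclideanSpace ℝ (Fin m)) (x : EuclideanSpace ℝ (Fin n))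
    -- `x̄ = A†b`: the unique vector in the row space `Range(Aᵀ)` satisfying the
    -- normal equations `Aᵀ A x̄ = Aᵀ b`
    (xbar : EuclideanSpace ℝ (Fin n))
    (hxbar_normal : mulE Aᵀ (mulE A xbar) = mulE Aᵀ b)
    (i : Fin m)
    -- the RKAS stepsize and update
    (α : ℝ) (hα : α = ⟪mulE A (rowE A i), mulE A x - b⟫ / ‖mulE A (rowE A i)‖ ^ 2)
    (xplus : EuclideanSpace ℝ (Fin n)) (hxplus : xplus = x - α • rowE A i) :
    ∀ t : ℝ,
      ‖mulE A (x - t • rowE A i) - mulE A xbar‖ ^ 2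
        ≥ ‖mulE A xplus - mulE A xbar‖ ^ 2 := by
  intro t
  have hα_line :
      α = ⟪mulE A (rowE A i), mulE A x - mulE A xbar⟫ / ‖mulE A (rowE A i)‖ ^ 2 := by
    rw [hα, ← sub_add_sub_cancel (mulE A x) (mulE A xbar) b, inner_add_right,
      inner_mulE_residual_eq_zero A hxbar_normal, add_zero]
  have hline : ∀ s : ℝ, mulE A (x - s • rowE A i) - mulE A xbar
      = (mulE A x - mulE A xbar) - s • mulE A (rowE A i) := fun s => by
    rw [mulE_sub_smul, sub_right_comm]
  rw [hxplus, hline, hline, hα_line]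
  exact norm_sub_div_smul_sq_le _ _ t

/-- the RKAS iterate `x⁺` minimizes `‖A y − A x̄‖²` over the line
`y = x − t A_{i,:}ᵀ`, `t ∈ ℝ`. -/
theorem rkas_step_line_minimizer (m n : ℕ) (A : Matrix (Fin m) (Fin n) ℝ)
    (b : EuclideanSpace ℝ (Fin m)) (x : EuclideanSpace ℝ (Fin n))
    -- `x̄ = A†b`: the unique vector in the row space `Range(Aᵀ)` satisfying the
    -- normal equations `Aᵀ A x̄ = Aᵀ b`
    (xbar : EuclideanSpace ℝ (Fin n))
    (hxbar_mem : xbar ∈ Set.range (mulE Aᵀ))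
    (hxbar_normal : mulE Aᵀ (mulE A xbar) = mulE Aᵀ b)
    -- a row index `i` with `A A_{i,:}ᵀ ≠ 0`
    (i : Fin m) (hAi : mulE A (rowE A i) ≠ 0)
    -- the RKAS stepsize and update
    (α : ℝ) (hα : α = ⟪mulE A (rowE A i), mulE A x - b⟫ / ‖mulE A (rowE A i)‖ ^ 2)
    (xplus : EuclideanSpace ℝ (Fin n)) (hxplus : xplus = x - α • rowE A i) :
    ∀ t : ℝ,
      ‖mulE A (x - t • rowE A i) - mulE A xbar‖ ^ 2
        ≥ ‖mulE A xplus - mulE A xbar‖ ^ 2 :=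
  rkas_step_line_minimizer_general m n A b x xbar hxbar_normal i α hα xplus hxplus
end
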